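/- In the braid group of DAHA type (generators X_1, Y_1, T_1 with relations T_1X_1T_1X_1 = X_1T_1X_1T_1, T_1Y_1T_1Y_1 = Y_1T_1Y_1T_1, and Y_2 = T_1Y_1T_1 with X_1^{-1}Y_2^{-1}X_1Y_2 = T_1²), the identity T_1^{-1}X_1^{-1}Y_1T_1^{-1}X_1^{-1}Y_1 = X_1^{-1}Y_1T_1^{-1}X_1^{-1}Y_1T_1^{-1} holds. -/
import Mathlib


/- STATEMENT 9: In the braid group of DAHA type (generators X_1, Y_1, T_1 with
relations T_1X_1T_1X_1 = X_1T_1X_1T_1, T_1Y_1T_1Y_1 = Y_1T_1Y_1T_1, and, with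
Y_2 := T_1Y_1T_1, X_1⁻¹Y_2⁻¹X_1Y_2 = T_1²), the identity
T_1⁻¹X_1⁻¹Y_1T_1⁻¹X_1⁻¹Y_1 = X_1⁻¹Y_1T_1⁻¹X_1⁻¹Y_1T_1⁻¹ holds. -/

theorem statement9 {M : Type*} [Monoid M] (X₁ Y₁ T₁ : Mˣ)
    (hX : T₁ * X₁ * T₁ * X₁ = X₁ * T₁ * X₁ * T₁)
    (hY : T₁ * Y₁ * T₁ * Y₁ = Y₁ * T₁ * Y₁ * T₁)
    (hR8 : X₁⁻¹ * (T₁ * Y₁ * T₁)⁻¹ * X₁ * (T₁ * Y₁ * T₁) = T₁ * T₁) :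
    T₁⁻¹ * X₁⁻¹ * Y₁ * T₁⁻¹ * X₁⁻¹ * Y₁ = X₁⁻¹ * Y₁ * T₁⁻¹ * X₁⁻¹ * Y₁ * T₁⁻¹ := by
  -- X₁ * Y₂ = Y₂ * X₁ * T₁²  where Y₂ = T₁Y₁T₁
  have hR8' : X₁ * (T₁ * Y₁ * T₁) = (T₁ * Y₁ * T₁) * X₁ * T₁ * T₁ := by
    calc X₁ * (T₁ * Y₁ * T₁)
        = (T₁ * Y₁ * T₁) * X₁ * (X₁⁻¹ * (T₁ * Y₁ * T₁)⁻¹ * X₁ * (T₁ * Y₁ * T₁)) := by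
          group
      _ = (T₁ * Y₁ * T₁) * X₁ * (T₁ * T₁) := by rw [hR8]
      _ = (T₁ * Y₁ * T₁) * X₁ * T₁ * T₁ := by group
  -- X₁⁻¹ * Y₂ = Y₂ * T₁⁻² * X₁⁻¹
  have f1 : X₁⁻¹ * (T₁ * Y₁ * T₁) = (T₁ * Y₁ * T₁) * T₁⁻¹ * T₁⁻¹ * X₁⁻¹ := by
    calc X₁⁻¹ * (T₁ * Y₁ * T₁)
        = (T₁ * Y₁ * T₁) * (X₁ * (T₁ * Y₁ * T₁))⁻¹ * (T₁ * Y₁ * T₁) := by group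
      _ = (T₁ * Y₁ * T₁) * ((T₁ * Y₁ * T₁) * X₁ * T₁ * T₁)⁻¹ * (T₁ * Y₁ * T₁) := by
          rw [hR8']
      _ = (T₁ * Y₁ * T₁) * T₁⁻¹ * T₁⁻¹ * X₁⁻¹ := by group
  -- inverse of hX
  have hXinv : T₁⁻¹ * X₁⁻¹ * T₁⁻¹ * X₁⁻¹ = X₁⁻¹ * T₁⁻¹ * X₁⁻¹ * T₁⁻¹ := by
    calc T₁⁻¹ * X₁⁻¹ * T₁⁻¹ * X₁⁻¹ = (X₁ * T₁ * X₁ * T₁)⁻¹ := by group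
      _ = (T₁ * X₁ * T₁ * X₁)⁻¹ := by rw [hX]
      _ = X₁⁻¹ * T₁⁻¹ * X₁⁻¹ * T₁⁻¹ := by group
  -- conjugated form of hX
  have f2 : T₁ * X₁⁻¹ * T₁⁻¹ * X₁⁻¹ = X₁⁻¹ * T₁⁻¹ * X₁⁻¹ * T₁ := by
    calc T₁ * X₁⁻¹ * T₁⁻¹ * X₁⁻¹ = T₁ * (T₁ * X₁ * T₁ * X₁)⁻¹ * T₁ := by group
      _ = T₁ * (X₁ * T₁ * X₁ * T₁)⁻¹ * T₁ := by rw [hX]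
      _ = X₁⁻¹ * T₁⁻¹ * X₁⁻¹ * T₁ := by group
  -- key: LHS equals X₁⁻¹T₁⁻¹X₁⁻¹Y₁T₁Y₁
  have keyW : T₁⁻¹ * X₁⁻¹ * Y₁ * T₁⁻¹ * X₁⁻¹ * Y₁
      = X₁⁻¹ * T₁⁻¹ * X₁⁻¹ * Y₁ * T₁ * Y₁ := by
    calc T₁⁻¹ * X₁⁻¹ * Y₁ * T₁⁻¹ * X₁⁻¹ * Y₁
        = T₁⁻¹ * X₁⁻¹ * T₁⁻¹ * ((T₁ * Y₁ * T₁) * T₁⁻¹ * T₁⁻¹ * X₁⁻¹)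
            * (T₁⁻¹ * (T₁ * Y₁ * T₁) * T₁⁻¹) := by group
      _ = T₁⁻¹ * X₁⁻¹ * T₁⁻¹ * (X₁⁻¹ * (T₁ * Y₁ * T₁))
            * (T₁⁻¹ * (T₁ * Y₁ * T₁) * T₁⁻¹) := by rw [← f1]
      _ = (T₁⁻¹ * X₁⁻¹ * T₁⁻¹ * X₁⁻¹)
            * ((T₁ * Y₁ * T₁) * T₁⁻¹ * (T₁ * Y₁ * T₁) * T₁⁻¹) := by group
      _ = (X₁⁻¹ * T₁⁻¹ * X₁⁻¹ * T₁⁻¹)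
            * ((T₁ * Y₁ * T₁) * T₁⁻¹ * (T₁ * Y₁ * T₁) * T₁⁻¹) := by rw [hXinv]
      _ = X₁⁻¹ * T₁⁻¹ * X₁⁻¹ * Y₁ * T₁ * Y₁ := by group
  calc T₁⁻¹ * X₁⁻¹ * Y₁ * T₁⁻¹ * X₁⁻¹ * Y₁
      = X₁⁻¹ * T₁⁻¹ * X₁⁻¹ * Y₁ * T₁ * Y₁ := keyW
    _ = X₁⁻¹ * T₁⁻¹ * X₁⁻¹ * (Y₁ * T₁ * Y₁ * T₁) * T₁⁻¹ := by group
    _ = X₁⁻¹ * T₁⁻¹ * X₁⁻¹ * (T₁ * Y₁ * T₁ * Y₁) * T₁⁻¹ := by rw [← hY]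
    _ = (X₁⁻¹ * T₁⁻¹ * X₁⁻¹ * T₁) * (Y₁ * T₁ * Y₁ * T₁⁻¹) := by group
    _ = (T₁ * X₁⁻¹ * T₁⁻¹ * X₁⁻¹) * (Y₁ * T₁ * Y₁ * T₁⁻¹) := by rw [← f2]
    _ = T₁ * (X₁⁻¹ * T₁⁻¹ * X₁⁻¹ * Y₁ * T₁ * Y₁) * T₁⁻¹ := by group
    _ = T₁ * (T₁⁻¹ * X₁⁻¹ * Y₁ * T₁⁻¹ * X₁⁻¹ * Y₁) * T₁⁻¹ := by rw [← keyW]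
    _ = X₁⁻¹ * Y₁ * T₁⁻¹ * X₁⁻¹ * Y₁ * T₁⁻¹ := by group
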